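/- Let Z be a metric measure space, 1 ≤ p < ∞, and V an n-dimensional Banach space. If Lipschitz functions with bounded support are dense in norm in the real-valued Sobolev space W^{1,p}(Z), then V-valued Lipschitz functions with bounded support are dense in norm in W^{1,p}(Z; V). -/

import Mathlib

open MeasureTheory Metric Bornology
open scoped ENNReal NNReal

/-- A path of speed at most `1` (unit-speed parametrization) defined on `[a,b]`.
Every rectifiable path arises this way after arclength reparametrization, and path
integrals are computed along such parametrizations. -/
structure UnitSpeedPath (Z : Type*) [MetricSpace Z] where
  a : ℝ
  b : ℝ
  hab : a ≤ b
  toFun : ℝ → Z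
  lip : LipschitzOnWith 1 toFun (Set.Icc a b)

/-- The path integral `∫_γ ρ ds` of a nonnegative function along a unit-speed path. -/
noncomputable def UnitSpeedPath.integral {Z : Type*} [MetricSpace Z]
    (γ : UnitSpeedPath Z) (ρ : Z → ℝ) : ℝ≥0∞ :=
  ∫⁻ t in Set.Icc γ.a γ.b, ENNReal.ofReal (ρ (γ.toFun t))

/-- A family `Γ` of paths is `p`-negligible if some nonnegative Borel `ρ ∈ L^p(μ)`
has infinite path integral along every path of `Γ`. -/
def PNegligible {Z : Type*} [MetricSpace Z] [MeasurableSpace Z]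
    (μ : MeasureTheory.Measure Z) (p : ℝ≥0∞) (Γ : Set (UnitSpeedPath Z)) : Prop :=
  ∃ ρ : Z → ℝ, Measurable ρ ∧ (∀ z, 0 ≤ ρ z) ∧ MeasureTheory.MemLp ρ p μ ∧
    ∀ γ ∈ Γ, γ.integral ρ = ∞

/-- `ρ` is a `p`-weak upper gradient of `u : Z → V`: `ρ` is a nonnegative Borel
function and, for `p`-almost every path `γ : [a,b] → Z`,
`‖u (γ a) − u (γ b)‖ ≤ ∫_γ ρ ds`. -/
def IsWeakUpperGradient {Z V : Type*} [MetricSpace Z] [MeasurableSpace Z]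
    [NormedAddCommGroup V] (μ : MeasureTheory.Measure Z) (p : ℝ≥0∞)
    (u : Z → V) (ρ : Z → ℝ) : Prop :=
  Measurable ρ ∧ (∀ z, 0 ≤ ρ z) ∧
    PNegligible μ p {γ : UnitSpeedPath Z |
      ¬ ENNReal.ofReal ‖u (γ.toFun γ.a) - u (γ.toFun γ.b)‖ ≤ γ.integral ρ}

/-- `ρ` is a minimal `p`-weak upper gradient of `u`: an `L^p`-integrable `p`-weak
upper gradient which is `μ`-a.e. dominated by every other `L^p`-integrable `p`-weak
upper gradient of `u`. -/
def IsMinimalWeakUpperGradient {Z V : Type*} [MetricSpace Z] [MeasurableSpace Z]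
    [NormedAddCommGroup V] (μ : MeasureTheory.Measure Z) (p : ℝ≥0∞)
    (u : Z → V) (ρ : Z → ℝ) : Prop :=
  IsWeakUpperGradient μ p u ρ ∧ MeasureTheory.MemLp ρ p μ ∧
    ∀ σ : Z → ℝ, IsWeakUpperGradient μ p u σ → MeasureTheory.MemLp σ p μ →
      ∀ᵐ z ∂μ, ρ z ≤ σ z

/-- Membership in the Newton–Sobolev space `W^{1,p}(Z; V)` (for a fixed representative):
`u ∈ L^p(Z; V)` together with an `L^p`-integrable `p`-weak upper gradient. -/
def MemNewtonSobolev {Z V : Type*} [MetricSpace Z] [MeasurableSpace Z]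
    [NormedAddCommGroup V] (μ : Measure Z) (p : ℝ≥0∞) (u : Z → V) : Prop :=
  MemLp u p μ ∧ ∃ ρ : Z → ℝ, IsWeakUpperGradient μ p u ρ ∧ MemLp ρ p μ


section Aux

variable {Z : Type*} [MetricSpace Z] [MeasurableSpace Z] {μ : Measure Z} {p : ℝ≥0∞}

theorem PNegligible.mono' {Γ Γ' : Set (UnitSpeedPath Z)} (h : PNegligible μ p Γ)
    (hsub : Γ' ⊆ Γ) : PNegligible μ p Γ' := by
  obtain ⟨ρ, h1, h2, h3, h4⟩ := h
  exact ⟨ρ, h1, h2, h3, fun γ hγ => h4 γ (hsub hγ)⟩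

theorem pnegligible_iUnion {ι : Type*} [Fintype ι] {Γ : ι → Set (UnitSpeedPath Z)}
    (h : ∀ i, PNegligible μ p (Γ i)) : PNegligible μ p (⋃ i, Γ i) := by
  choose ρ hm hnn hLp hint using h
  refine ⟨fun z => ∑ i, ρ i z, Finset.measurable_sum _ fun i _ => hm i,
    fun z => Finset.sum_nonneg fun i _ => hnn i z, memLp_finset_sum _ fun i _ => hLp i, ?_⟩
  intro γ hγ
  obtain ⟨i, hi⟩ := Set.mem_iUnion.1 hγ
  refine top_unique ?_
  rw [← hint i γ hi]
  simp only [UnitSpeedPath.integral]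
  exact lintegral_mono fun t => ENNReal.ofReal_le_ofReal
    (Finset.single_le_sum (fun j _ => hnn j _) (Finset.mem_univ i))

theorem UnitSpeedPath.integral_const_mul (γ : UnitSpeedPath Z) {c : ℝ} (hc : 0 ≤ c)
    (ρ : Z → ℝ) :
    γ.integral (fun z => c * ρ z) = ENNReal.ofReal c * γ.integral ρ := by
  simp only [UnitSpeedPath.integral, ENNReal.ofReal_mul hc]
  rw [lintegral_const_mul' _ _ ENNReal.ofReal_ne_top]

theorem lintegral_finset_sum_le'' {α : Type*} [MeasurableSpace α] (ν : MeasureTheory.Measure α)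
    {ι : Type*} (s : Finset ι) (f : ι → α → ℝ≥0∞) :
    (∑ i ∈ s, ∫⁻ a, f i a ∂ν) ≤ ∫⁻ a, ∑ i ∈ s, f i a ∂ν := by
  classical
  induction s using Finset.induction with
  | empty => simp
  | insert i s hnot ih =>
    simp only [Finset.sum_insert hnot]
    calc (∫⁻ a, f i a ∂ν) + ∑ j ∈ s, ∫⁻ a, f j a ∂ν
        ≤ (∫⁻ a, f i a ∂ν) + ∫⁻ a, ∑ j ∈ s, f j a ∂ν := add_le_add_right ih _
      _ ≤ ∫⁻ a, (f i a + ∑ j ∈ s, f j a) ∂ν := by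
          simpa using MeasureTheory.le_lintegral_add (fun a => f i a) (fun a => ∑ j ∈ s, f j a)

theorem LipschitzWith.finset_sum' {α W : Type*} [PseudoEMetricSpace α] [NormedAddCommGroup W]
    {ι : Type*} (s : Finset ι) (f : ι → α → W) (K : ι → ℝ≥0)
    (h : ∀ i ∈ s, LipschitzWith (K i) (f i)) :
    LipschitzWith (∑ i ∈ s, K i) (fun z => ∑ i ∈ s, f i z) := by
  classical
  induction s using Finset.induction with
  | empty => simpa using LipschitzWith.const (0 : W)
  | insert i s hnot ih =>
    simp only [Finset.sum_insert hnot]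
    exact (h i (Finset.mem_insert_self i s)).add
      (ih fun j hj => h j (Finset.mem_insert_of_mem hj))

theorem lipschitzWith_smul_const' {α W : Type*} [PseudoEMetricSpace α] [NormedAddCommGroup W]
    [NormedSpace ℝ W] {K : ℝ≥0} {f : α → ℝ} (hf : LipschitzWith K f) (c : W) :
    LipschitzWith (K * ‖c‖₊) (fun z => f z • c) := by
  have h1 : LipschitzWith ‖c‖₊ (fun r : ℝ => r • c) := by
    refine LipschitzWith.of_dist_le_mul fun x y => ?_
    rw [dist_eq_norm, dist_eq_norm, ← sub_smul, norm_smul]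
    simp [mul_comm]
  simpa [mul_comm, Function.comp_def] using h1.comp hf

theorem IsWeakUpperGradient.clm_comp {V W : Type*} [NormedAddCommGroup V] [NormedSpace ℝ V]
    [NormedAddCommGroup W] [NormedSpace ℝ W] {u : Z → V} {ρ : Z → ℝ}
    (h : IsWeakUpperGradient μ p u ρ) (T : V →L[ℝ] W) :
    IsWeakUpperGradient μ p (fun z => T (u z)) (fun z => ‖T‖ * ρ z) := by
  obtain ⟨hm, hnn, hneg⟩ := h
  refine ⟨hm.const_mul _, fun z => mul_nonneg (norm_nonneg T) (hnn z), hneg.mono' ?_⟩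
  intro γ hγ
  simp only [Set.mem_setOf_eq] at hγ ⊢
  refine fun hle => hγ ?_
  calc ENNReal.ofReal ‖T (u (γ.toFun γ.a)) - T (u (γ.toFun γ.b))‖
      = ENNReal.ofReal ‖T (u (γ.toFun γ.a) - u (γ.toFun γ.b))‖ := by rw [map_sub]
    _ ≤ ENNReal.ofReal (‖T‖ * ‖u (γ.toFun γ.a) - u (γ.toFun γ.b)‖) :=
        ENNReal.ofReal_le_ofReal (T.le_opNorm _)
    _ = ENNReal.ofReal ‖T‖ * ENNReal.ofReal ‖u (γ.toFun γ.a) - u (γ.toFun γ.b)‖ :=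
        ENNReal.ofReal_mul (norm_nonneg T)
    _ ≤ ENNReal.ofReal ‖T‖ * γ.integral ρ := mul_le_mul_right hle _
    _ = γ.integral (fun z => ‖T‖ * ρ z) := (γ.integral_const_mul (norm_nonneg T) ρ).symm

theorem isWeakUpperGradient_sum {V : Type*} [NormedAddCommGroup V] [NormedSpace ℝ V]
    {ι : Type*} [Fintype ι] {w : ι → Z → ℝ} {σ : ι → Z → ℝ} (e : ι → V)
    (h : ∀ i, IsWeakUpperGradient μ p (w i) (σ i)) :
    IsWeakUpperGradient μ p (fun z => ∑ i, w i z • e i) (fun z => ∑ i, ‖e i‖ * σ i z) := by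
  refine ⟨Finset.measurable_sum _ fun i _ => ((h i).1).const_mul _,
    fun z => Finset.sum_nonneg fun i _ => mul_nonneg (norm_nonneg _) ((h i).2.1 z),
    (pnegligible_iUnion (fun i => (h i).2.2)).mono' ?_⟩
  intro γ hγ
  simp only [Set.mem_setOf_eq, Set.mem_iUnion] at hγ ⊢
  by_contra hcon
  push_neg at hcon
  apply hγ
  set x := γ.toFun γ.a
  set y := γ.toFun γ.b
  have hstep : (∑ i, w i x • e i) - (∑ i, w i y • e i) = ∑ i, (w i x - w i y) • e i := by
    rw [← Finset.sum_sub_distrib]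
    exact Finset.sum_congr rfl fun i _ => (sub_smul _ _ _).symm
  calc ENNReal.ofReal ‖(∑ i, w i x • e i) - (∑ i, w i y • e i)‖
      = ENNReal.ofReal ‖∑ i, (w i x - w i y) • e i‖ := by rw [hstep]
    _ ≤ ENNReal.ofReal (∑ i, ‖e i‖ * ‖w i x - w i y‖) := by
        refine ENNReal.ofReal_le_ofReal ((norm_sum_le _ _).trans (le_of_eq ?_))
        exact Finset.sum_congr rfl fun i _ => by rw [norm_smul, mul_comm]
    _ = ∑ i, ENNReal.ofReal (‖e i‖ * ‖w i x - w i y‖) :=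
        ENNReal.ofReal_sum_of_nonneg fun i _ => mul_nonneg (norm_nonneg _) (norm_nonneg _)
    _ ≤ ∑ i, γ.integral (fun z => ‖e i‖ * σ i z) := by
        refine Finset.sum_le_sum fun i _ => ?_
        rw [ENNReal.ofReal_mul (norm_nonneg _), γ.integral_const_mul (norm_nonneg _)]
        exact mul_le_mul_right (hcon i) _
    _ ≤ γ.integral (fun z => ∑ i, ‖e i‖ * σ i z) := by
        simp only [UnitSpeedPath.integral]
        refine le_trans (le_of_eq rfl) ?_
        refine le_trans (lintegral_finset_sum_le'' _ _ _) (le_of_eq ?_)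
        refine lintegral_congr fun t => ?_
        exact (ENNReal.ofReal_sum_of_nonneg fun i _ =>
          mul_nonneg (norm_nonneg _) ((h i).2.1 _)).symm

end Aux

/-- **Lemma 4.6.** Let `1 ≤ p < ∞` and let `V` be a finite-dimensional Banach space.
If Lipschitz functions with bounded support are norm-dense in `W^{1,p}(Z)` (in the
sense that every Sobolev function can be approximated in `L^p` and in the `L^p` norm
of an upper gradient of the difference), then `V`-valued Lipschitz functions with
bounded support are norm-dense in `W^{1,p}(Z; V)`. -/
theorem stmt_10 {Z V : Type*} [MetricSpace Z] [MeasurableSpace Z] [BorelSpace Z]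
    [NormedAddCommGroup V] [NormedSpace ℝ V] [FiniteDimensional ℝ V]
    (μ : Measure Z) (p : ℝ≥0∞) (hp : 1 ≤ p) (hp' : p ≠ ⊤)
    (hdense : ∀ u : Z → ℝ, MemNewtonSobolev μ p u → ∀ ε : ℝ, 0 < ε →
      ∃ (h : Z → ℝ) (L : ℝ≥0), LipschitzWith L h ∧ IsBounded {z | h z ≠ 0} ∧
        eLpNorm (fun z => u z - h z) p μ < ENNReal.ofReal ε ∧
        ∃ σ : Z → ℝ, IsWeakUpperGradient μ p (fun z => u z - h z) σ ∧
          eLpNorm σ p μ < ENNReal.ofReal ε) :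
    ∀ u : Z → V, MemNewtonSobolev μ p u → ∀ ε : ℝ, 0 < ε →
      ∃ (h : Z → V) (L : ℝ≥0), LipschitzWith L h ∧ IsBounded {z | h z ≠ 0} ∧
        eLpNorm (fun z => u z - h z) p μ < ENNReal.ofReal ε ∧
        ∃ σ : Z → ℝ, IsWeakUpperGradient μ p (fun z => u z - h z) σ ∧
          eLpNorm σ p μ < ENNReal.ofReal ε := by
  classical
  intro u hu ε hε
  obtain ⟨huLp, ρ, hwug, hρLp⟩ := hu
  set n := Module.finrank ℝ V with hn
  let bV : Module.Basis (Fin n) ℝ V := Module.finBasis ℝ V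
  let T : Fin n → V →L[ℝ] ℝ := fun i => LinearMap.toContinuousLinearMap (bV.coord i)
  let ui : Fin n → Z → ℝ := fun i z => T i (u z)
  have huiLp : ∀ i, MemLp (ui i) p μ := fun i => (T i).comp_memLp' huLp
  have hns : ∀ i, MemNewtonSobolev μ p (ui i) := fun i =>
    ⟨huiLp i, fun z => ‖T i‖ * ρ z, hwug.clm_comp (T i), hρLp.const_mul _⟩
  set C := ∑ i : Fin n, ‖bV i‖ with hCdef
  have hC : 0 ≤ C := Finset.sum_nonneg fun i _ => norm_nonneg _
  set δ := ε / (C + 1) with hδdef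
  have hδ : 0 < δ := div_pos hε (by linarith)
  choose h L hlip hbdd hnrm σs hwugs hσnrm using fun i => hdense (ui i) (hns i) δ hδ
  -- key arithmetic bound
  have key : ∀ g : Fin n → ℝ≥0∞, (∀ i, g i ≤ ENNReal.ofReal δ) →
      (∑ i, ENNReal.ofReal ‖bV i‖ * g i) < ENNReal.ofReal ε := by
    intro g hg
    calc (∑ i, ENNReal.ofReal ‖bV i‖ * g i)
        ≤ ∑ i, ENNReal.ofReal ‖bV i‖ * ENNReal.ofReal δ :=
          Finset.sum_le_sum fun i _ => mul_le_mul_right (hg i) _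
      _ = ENNReal.ofReal (∑ i, ‖bV i‖ * δ) := by
          rw [ENNReal.ofReal_sum_of_nonneg fun i _ => mul_nonneg (norm_nonneg _) hδ.le]
          exact Finset.sum_congr rfl fun i _ => (ENNReal.ofReal_mul (norm_nonneg _)).symm
      _ < ENNReal.ofReal ε := by
          rw [ENNReal.ofReal_lt_ofReal_iff hε, ← Finset.sum_mul, ← hCdef, hδdef]
          have h1 : C * (ε / (C + 1)) < (C + 1) * (ε / (C + 1)) :=
            mul_lt_mul_of_pos_right (lt_add_one C) (div_pos hε (by linarith))
          have h2 : (C + 1) * (ε / (C + 1)) = ε := by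
            field_simp
          linarith
  have hrepr : ∀ z, u z - (∑ i, h i z • bV i) = ∑ i, (ui i z - h i z) • bV i := by
    intro z
    have hz : u z = ∑ i, ui i z • bV i := by
      simp only [ui, T, LinearMap.coe_toContinuousLinearMap', Module.Basis.coord_apply]
      exact (bV.sum_repr (u z)).symm
    rw [hz, ← Finset.sum_sub_distrib]
    exact Finset.sum_congr rfl fun i _ => (sub_smul _ _ _).symm
  have hAESMd : ∀ i, AEStronglyMeasurable (fun z => ui i z - h i z) μ := fun i =>
    (huiLp i).aestronglyMeasurable.sub
      (hlip i).continuous.stronglyMeasurable.aestronglyMeasurable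
  refine ⟨fun z => ∑ i, h i z • bV i, ∑ i, L i * ‖bV i‖₊, ?_, ?_, ?_, ?_⟩
  · exact LipschitzWith.finset_sum' _ _ _ fun i _ => lipschitzWith_smul_const' (hlip i) (bV i)
  · refine ((isBounded_iUnion (s := fun i => {z | h i z ≠ 0})).2 fun i => hbdd i).subset ?_
    intro z hz
    simp only [Set.mem_setOf_eq] at hz
    by_contra hmem
    simp only [Set.mem_iUnion, Set.mem_setOf_eq, not_exists, not_not] at hmem
    exact hz (Finset.sum_eq_zero fun i _ => by rw [hmem i, zero_smul])
  · calc eLpNorm (fun z => u z - ∑ i, h i z • bV i) p μ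
        = eLpNorm (∑ i : Fin n, fun z => (ui i z - h i z) • bV i) p μ := by
          refine eLpNorm_congr_ae (Filter.Eventually.of_forall fun z => ?_)
          simp only [Finset.sum_apply]
          exact hrepr z
      _ ≤ ∑ i, eLpNorm (fun z => (ui i z - h i z) • bV i) p μ :=
          eLpNorm_sum_le (fun i _ => (hAESMd i).smul_const _) hp
      _ = ∑ i, ENNReal.ofReal ‖bV i‖ * eLpNorm (fun z => ui i z - h i z) p μ := by
          refine Finset.sum_congr rfl fun i _ => ?_
          have he : eLpNorm (fun z => (ui i z - h i z) • bV i) p μ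
              = eLpNorm ((‖bV i‖ : ℝ) • fun z => ui i z - h i z) p μ := by
            refine eLpNorm_congr_norm_ae (Filter.Eventually.of_forall fun z => ?_)
            simp only [Pi.smul_apply, norm_smul, smul_eq_mul, Real.norm_eq_abs,
              abs_mul, abs_norm]
            ring
          rw [he, eLpNorm_const_smul]
          congr 1
          exact Real.enorm_eq_ofReal (norm_nonneg _)
      _ < ENNReal.ofReal ε := key _ fun i => (hnrm i).le
  · refine ⟨fun z => ∑ i, ‖bV i‖ * σs i z, ?_, ?_⟩
    · have hw := isWeakUpperGradient_sum (μ := μ) (p := p) bV hwugs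
      have hfun : (fun z => ∑ i, (ui i z - h i z) • bV i)
          = fun z => u z - ∑ i, h i z • bV i := funext fun z => (hrepr z).symm
      rwa [hfun] at hw
    · calc eLpNorm (fun z => ∑ i, ‖bV i‖ * σs i z) p μ
          = eLpNorm (∑ i : Fin n, fun z => ‖bV i‖ * σs i z) p μ := by
            refine eLpNorm_congr_ae (Filter.Eventually.of_forall fun z => ?_)
            simp [Finset.sum_apply]
        _ ≤ ∑ i, eLpNorm (fun z => ‖bV i‖ * σs i z) p μ :=
            eLpNorm_sum_le (fun i _ =>
              (((hwugs i).1.const_mul _)).aestronglyMeasurable) hp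
        _ = ∑ i, ENNReal.ofReal ‖bV i‖ * eLpNorm (σs i) p μ := by
            refine Finset.sum_congr rfl fun i _ => ?_
            have : (fun z => ‖bV i‖ * σs i z) = (‖bV i‖ : ℝ) • σs i := rfl
            rw [this, eLpNorm_const_smul]
            congr 1
            exact Real.enorm_eq_ofReal (norm_nonneg _)
        _ < ENNReal.ofReal ε := key _ fun i => (hσnrm i).le
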